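/- Let y_m ∈ D([0,T], S_m), m ≥ 1, be a sequence of càdlàg step trajectories such that R_m y_{m+1} = y_m for all m ≥ 1. Then there exists a trajectory y in E([0,T], S_d) such that R_m y = y_m for all m ≥ 1; y is the pointwise limit of the nondecreasing sequence y_m. -/

import Mathlib

open Filter Topology Set

noncomputable section
namespace Soft

abbrev Sd := ℕ∞

noncomputable def sval (k : Sd) : ℝ := if k = ⊤ then 0 else 1 / ((k.toNat : ℝ) + 1)

noncomputable def sdist (k j : Sd) : ℝ := |sval k - sval j|

/-- left-limit filter within `[0,T]` -/
def lf (T t : ℝ) : Filter ℝ := 𝓝[Set.Icc 0 T ∩ Set.Iio t] t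

/-- right-limit filter within `[0,T]` -/
def rf (T t : ℝ) : Filter ℝ := 𝓝[Set.Icc 0 T ∩ Set.Ioi t] t

def leftLim (T : ℝ) (x : ℝ → Sd) (t : ℝ) (L : Sd) : Prop := Tendsto x (lf T t) (𝓝 L)

def rightLim (T : ℝ) (x : ℝ → Sd) (t : ℝ) (L : Sd) : Prop := Tendsto x (rf T t) (𝓝 L)

/-- the set of cluster points of `x(s)`, `s ↑ t`, is exactly the pair `{n, ∞}` -/
def softLeftPair (T : ℝ) (x : ℝ → Sd) (t : ℝ) (n : ℕ) : Prop :=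
  {L : Sd | MapClusterPt L (lf T t) x} = {(n : Sd), ⊤}

def softRightPair (T : ℝ) (x : ℝ → Sd) (t : ℝ) (n : ℕ) : Prop :=
  {L : Sd | MapClusterPt L (rf T t) x} = {(n : Sd), ⊤}

/-- `x` has a soft left-limit at `t` -/
def softLeftLim (T : ℝ) (x : ℝ → Sd) (t : ℝ) : Prop :=
  (∃ L, leftLim T x t L) ∨ ∃ n : ℕ, softLeftPair T x t n

/-- `x` is soft right-continuous at `t` -/
def softRightCont (T : ℝ) (x : ℝ → Sd) (t : ℝ) : Prop :=
  rightLim T x t ⊤ ∨ (∃ n : ℕ, rightLim T x t (n : Sd) ∧ x t = (n : Sd)) ∨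
    ∃ n : ℕ, softRightPair T x t n ∧ x t = (n : Sd)

/-- the space `𝔼([0,T], S_d)` of soft right-continuous trajectories with soft left-limits -/
def memBbE (T : ℝ) (x : ℝ → Sd) : Prop :=
  (∀ t ∈ Set.Icc 0 T, softRightCont T x t) ∧ ∀ t ∈ Set.Ioc 0 T, softLeftLim T x t

/-- time of last visit before `t` to the set `{k : P k}` (with the convention `= 0`
if there is no such visit, since `sSup ∅ = 0` in `ℝ`) -/
def lastVisit (P : Sd → Prop) (x : ℝ → Sd) (t : ℝ) : ℝ :=
  sSup {s | s ∈ Set.Icc 0 t ∧ P (x s)}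

open Classical in
/-- the record operator: the last value in `{k : P k}` visited by `x` before time `t`;
equal to the bottom state `0` before the first visit -/
noncomputable def srec (T : ℝ) (P : Sd → Prop) (x : ℝ → Sd) (t : ℝ) : Sd :=
  if ∃ s ∈ Set.Icc 0 t, P (x s) then
    if P (x (lastVisit P x t)) then x (lastVisit P x t)
    else if h : ∃ L, leftLim T x (lastVisit P x t) L then h.choose
    else if h2 : ∃ n : ℕ, softLeftPair T x (lastVisit P x t) n then (h2.choose : Sd)
    else 0
  else 0

/-- `R_m`, the operator recording the last site visited in `S_m = {0,…,m}` -/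
noncomputable def Rm (T : ℝ) (m : ℕ) (x : ℝ → Sd) : ℝ → Sd :=
  srec T (fun k => k ≤ (m : Sd)) x

/-- `R_∞`, the operator recording the last site visited in `ℕ` -/
noncomputable def Rinf (T : ℝ) (x : ℝ → Sd) : ℝ → Sd := srec T (fun k => k ≠ ⊤) x

/-- `σ_∞(t)`, the time of the last visit to `ℕ` before `t` -/
def sigmaInf (x : ℝ → Sd) (t : ℝ) : ℝ := lastVisit (fun k => k ≠ ⊤) x t

/-- `D([0,T], S_m)`: càdlàg trajectories with values in `S_m = {0,…,m}` -/
def memD (T : ℝ) (m : ℕ) (x : ℝ → Sd) : Prop :=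
  (∀ t ∈ Set.Icc 0 T, x t ≤ (m : Sd)) ∧
  (∀ t ∈ Set.Ico 0 T, rightLim T x t (x t)) ∧
  ∀ t ∈ Set.Ioc 0 T, ∃ L, leftLim T x t L

/-- `D([0,T], S_d)`: càdlàg trajectories with values in `S_d` -/
def memDd (T : ℝ) (x : ℝ → Sd) : Prop :=
  (∀ t ∈ Set.Ico 0 T, rightLim T x t (x t)) ∧
  ∀ t ∈ Set.Ioc 0 T, ∃ L, leftLim T x t L

/-- the space `E([0,T], S_d)` -/
def memE (T : ℝ) (x : ℝ → Sd) : Prop :=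
  memBbE T x ∧ x 0 ≠ ⊤ ∧
  ∀ t ∈ Set.Ioc 0 T, x t = ⊤ →
    0 < sigmaInf x t ∧ x (sigmaInf x t) = ⊤ ∧ leftLim T x (sigmaInf x t) ⊤

/-- `Λ_T(x)`, the time spent at `∞` -/
noncomputable def LambdaT (T : ℝ) (x : ℝ → Sd) : ℝ :=
  (MeasureTheory.volume {s | s ∈ Set.Icc 0 T ∧ x s = ⊤}).toReal

/-- `D^*([0,T], S_d)`: càdlàg trajectories spending no time at `∞`, continuous at `T` -/
def memDstar (T : ℝ) (x : ℝ → Sd) : Prop :=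
  memDd T x ∧ LambdaT T x = 0 ∧ leftLim T x T (x T)

/-- `E^*([0,T], S_d)`: the image of `D^*([0,T], S_d)` under `R_∞` -/
def memEstar (T : ℝ) (x : ℝ → Sd) : Prop :=
  memE T x ∧ ∃ y, memDstar T y ∧ Set.EqOn (Rinf T y) x (Set.Icc 0 T)

/-- the set `Λ` of time changes: increasing continuous bijections of `[0,T]` fixing `0, T` -/
def TimeChange (T : ℝ) (l : ℝ → ℝ) : Prop :=
  l 0 = 0 ∧ l T = T ∧ ContinuousOn l (Set.Icc 0 T) ∧ StrictMonoOn l (Set.Icc 0 T) ∧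
    Set.MapsTo l (Set.Icc 0 T) (Set.Icc 0 T)

/-- the Skorohod metric -/
noncomputable def dS (T : ℝ) (x y : ℝ → Sd) : ℝ :=
  sInf {a : ℝ | ∃ l, TimeChange T l ∧
    (∀ t ∈ Set.Icc 0 T, sdist (x t) (y (l t)) ≤ a) ∧
    ∀ s ∈ Set.Icc 0 T, ∀ t ∈ Set.Icc 0 T, s < t → |Real.log ((l t - l s) / (t - s))| ≤ a}

/-- the soft metric `d(x,y) = Σ_m 2^{-(m+1)} d_S(R_m x, R_m y)` -/
noncomputable def dE (T : ℝ) (x y : ℝ → Sd) : ℝ :=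
  ∑' m : ℕ, (1 / 2 : ℝ) ^ (m + 1) * dS T (Rm T m x) (Rm T m y)

/-- the left endpoints of the maximal intervals on which `x = j` -/
def entryPoints (T : ℝ) (j : Sd) (x : ℝ → Sd) : Set ℝ :=
  {t | t ∈ Set.Icc 0 T ∧ x t = j ∧
    (t = 0 ∨ ∀ δ > 0, ∃ s ∈ Set.Ioo (t - δ) t ∩ Set.Icc 0 T, x s ≠ j)}

/-- `N_j(x)`, the number of visits of `x` to `j` -/
noncomputable def Nvisits (T : ℝ) (j : Sd) (x : ℝ → Sd) : ℕ := (entryPoints T j x).ncard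

/-- the start of the `(l+1)`-th visit to `j` (0-indexed) -/
noncomputable def nthEntry (T : ℝ) (j : Sd) (x : ℝ → Sd) (l : ℕ) : ℝ :=
  sInf {e | e ∈ entryPoints T j x ∧ {s | s ∈ entryPoints T j x ∧ s < e}.ncard = l}

noncomputable def exitTime (T : ℝ) (j : Sd) (x : ℝ → Sd) (t : ℝ) : ℝ :=
  sInf ({s | s ∈ Set.Ioc t T ∧ x s ≠ j} ∪ {T})

/-- `T_{j,l}(x)`, the length of the `l`-th holding interval at `j` (1-indexed),
`0` if `l > N_j(x)` -/
noncomputable def holdingTime (T : ℝ) (j : Sd) (x : ℝ → Sd) (l : ℕ) : ℝ :=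
  if 1 ≤ l ∧ l ≤ Nvisits T j x then
    exitTime T j x (nthEntry T j x (l - 1)) - nthEntry T j x (l - 1)
  else 0

end Soft

/-!
The trajectory is `Y = ⨆ m, y m`. Since `y m = R_m y (m + 1)`, one has `y m t = y (m + 1) t`
whenever `y (m + 1) t ≤ m`; hence `m ↦ y m t` is nondecreasing and `y m = Y` wherever `Y ≤ m`.
The key fact is that a record only changes at a visit: if `y k` jumps at `t`, then
`y (j + 1) t ≤ j` for all `j ≥ k`, so `Y t = y k t ≤ k`. Therefore `y m` is constant on every
interval where `Y > m`, which gives `R_m Y = y m`; and on an interval where `Y = ⊤` no `y k`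
jumps, which forces `Y = ⊤` at the last visit `σ_∞(t)` to `ℕ` and just before it.
Each `y k` is locally constant on both sides of every time, so near a time `Y` either equals one
finite value or exceeds any given level; this yields the soft one-sided limits.
-/

namespace Soft

section Filters

variable {T t a : ℝ}

lemma lf_neBot (h0 : 0 < t) (hT : t ≤ T) : (lf T t).NeBot :=
  haveI := right_nhdsWithin_Ioo_neBot h0
  neBot_of_le (nhdsWithin_mono t fun w (hw : w ∈ Ioo 0 t) => ⟨⟨hw.1.le, hw.2.le.trans hT⟩, hw.2⟩)

lemma eventually_mem_lf : ∀ᶠ w in lf T t, w ∈ Icc 0 T ∧ w < t := self_mem_nhdsWithin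

lemma eventually_mem_rf : ∀ᶠ w in rf T t, w ∈ Icc 0 T ∧ t < w := self_mem_nhdsWithin

lemma eventually_gt_lf (ha : a < t) : ∀ᶠ w in lf T t, a < w :=
  mem_nhdsWithin_of_mem_nhds (Ioi_mem_nhds ha)

lemma frequently_lf_of_isLUB {A : Set ℝ} (hA : IsLUB A a) (hne : A.Nonempty)
    (hsub : A ⊆ Icc 0 T) (ha : a ∉ A) : ∃ᶠ w in lf T a, w ∈ A := by
  rw [lf, frequently_nhdsWithin_iff]
  refine (frequently_nhdsWithin_iff.1 (hA.frequently_mem hne)).mono fun w ⟨hw, hwa⟩ => ?_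
  exact ⟨hw, hsub hw, hwa.lt_of_ne (ne_of_mem_of_not_mem hw ha)⟩

lemma frequently_rf_of_isGLB {A : Set ℝ} (hA : IsGLB A a) (hne : A.Nonempty)
    (hsub : A ⊆ Icc 0 T) (ha : a ∉ A) : ∃ᶠ w in rf T a, w ∈ A := by
  rw [rf, frequently_nhdsWithin_iff]
  refine (frequently_nhdsWithin_iff.1 (hA.frequently_mem hne)).mono fun w ⟨hw, hwa⟩ => ?_
  exact ⟨hw, hsub hw, hwa.lt_of_ne (ne_of_mem_of_not_mem hw ha).symm⟩

end Filters

section ENatLimits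

variable {l : Filter ℝ} {x : ℝ → Sd} {n : ℕ}

lemma tendsto_natCast_iff : Tendsto x l (𝓝 (n : Sd)) ↔ ∀ᶠ w in l, x w = n := by
  rw [ENat.nhds_natCast, tendsto_pure]

lemma mapClusterPt_natCast_iff : MapClusterPt (n : Sd) l x ↔ ∃ᶠ w in l, x w = n := by
  rw [mapClusterPt_iff_frequently]
  refine ⟨fun h => h {(n : Sd)} (ENat.mem_nhds_natCast_iff n |>.2 rfl), fun h s hs => ?_⟩
  exact h.mono fun w hw => hw ▸ (ENat.mem_nhds_natCast_iff n).1 hs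

lemma mapClusterPt_top_iff : MapClusterPt (⊤ : Sd) l x ↔ ∀ k : ℕ, ∃ᶠ w in l, (k : Sd) < x w := by
  rw [nhds_top_basis.mapClusterPt_iff_frequently]
  refine ⟨fun h k => h k (ENat.natCast_lt_top k), fun h a ha => ?_⟩
  lift a to ℕ using ha.ne
  exact h a

lemma eq_of_mapClusterPt_of_tendsto {L a : Sd} (hL : MapClusterPt L l x)
    (ha : Tendsto x l (𝓝 a)) : L = a :=
  eq_of_nhds_neBot (ClusterPt.mono hL ha)

lemma tendsto_or_cluster_eq_pair (h : ∀ k : ℕ, ∀ᶠ w in l, x w = n ∨ (k : Sd) < x w) :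
    Tendsto x l (𝓝 n) ∨ Tendsto x l (𝓝 ⊤) ∨ {L | MapClusterPt L l x} = {(n : Sd), ⊤} := by
  by_cases hn : ∀ᶠ w in l, x w = n
  · exact Or.inl (tendsto_natCast_iff.2 hn)
  by_cases hne : ∀ᶠ w in l, x w ≠ n
  · refine Or.inr (Or.inl (ENat.tendsto_nhds_top_iff_natCast_lt.2 fun k => ?_))
    exact ((h k).and hne).mono fun w ⟨hor, hw⟩ => hor.resolve_left hw
  rw [not_eventually] at hn hne
  simp only [not_not] at hne
  have htop : MapClusterPt (⊤ : Sd) l x := mapClusterPt_top_iff.2 fun k =>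
    (hn.and_eventually (h k)).mono fun w ⟨hw, hor⟩ => hor.resolve_left hw
  refine Or.inr (Or.inr (Set.ext fun L => ⟨fun hL => ?_, ?_⟩))
  · induction L using ENat.recTopCoe with
    | top => exact Or.inr rfl
    | coe k =>
      obtain ⟨w, hwk, hw⟩ := ((mapClusterPt_natCast_iff.1 hL).and_eventually (h k)).exists
      rw [hwk] at hw
      exact Or.inl (hw.resolve_right (lt_irrefl _))
  · rintro (rfl | rfl)
    exacts [mapClusterPt_natCast_iff.2 hne, htop]

end ENatLimits

section Record

variable {T t : ℝ} {P : Sd → Prop} {x : ℝ → Sd}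

lemma le_lastVisit {s : ℝ} (hs : s ∈ Icc 0 t) (hP : P (x s)) : s ≤ lastVisit P x t :=
  le_csSup ⟨t, fun _ hu => hu.1.2⟩ ⟨hs, hP⟩

lemma lastVisit_mem_Icc (hne : ∃ s ∈ Icc 0 t, P (x s)) : lastVisit P x t ∈ Icc 0 t := by
  obtain ⟨s, hs, hP⟩ := hne
  exact ⟨hs.1.trans (le_lastVisit hs hP), csSup_le ⟨s, hs, hP⟩ fun _ hu => hu.1.2⟩

lemma not_of_lastVisit_lt {s : ℝ} (hs : s ∈ Icc 0 t) (hlt : lastVisit P x t < s) : ¬ P (x s) :=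
  fun hP => (le_lastVisit hs hP).not_gt hlt

lemma lastVisit_eq_self (ht : 0 ≤ t) (h : P (x t)) : lastVisit P x t = t :=
  le_antisymm (lastVisit_mem_Icc ⟨t, ⟨ht, le_rfl⟩, h⟩).2 (le_lastVisit ⟨ht, le_rfl⟩ h)

lemma srec_of_not_exists (h : ¬ ∃ s ∈ Icc 0 t, P (x s)) : srec T P x t = 0 := by
  rw [srec, if_neg h]

lemma srec_of_lastVisit (hne : ∃ s ∈ Icc 0 t, P (x s)) (hP : P (x (lastVisit P x t))) :
    srec T P x t = x (lastVisit P x t) := by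
  rw [srec, if_pos hne, if_pos hP]

lemma srec_eq_self (ht : 0 ≤ t) (h : P (x t)) : srec T P x t = x t := by
  rw [srec_of_lastVisit ⟨t, ⟨ht, le_rfl⟩, h⟩ (by rwa [lastVisit_eq_self ht h]),
    lastVisit_eq_self ht h]

lemma srec_eq_of_lastVisit_le {t' : ℝ} (hne : ∃ s ∈ Icc 0 t, P (x s))
    (h1 : lastVisit P x t ≤ t') (h2 : t' ≤ t) : srec T P x t' = srec T P x t := by
  have hset : {u | u ∈ Icc 0 t' ∧ P (x u)} = {u | u ∈ Icc 0 t ∧ P (x u)} :=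
    Set.ext fun u => ⟨fun ⟨hu, hP⟩ => ⟨⟨hu.1, hu.2.trans h2⟩, hP⟩,
      fun ⟨hu, hP⟩ => ⟨⟨hu.1, (le_lastVisit hu hP).trans h1⟩, hP⟩⟩
  have hne' : ∃ s ∈ Icc 0 t', P (x s) := by
    obtain ⟨s, hs, hP⟩ := hne
    exact ⟨s, ⟨hs.1, (le_lastVisit hs hP).trans h1⟩, hP⟩
  rw [srec, srec, if_pos hne', if_pos hne, lastVisit, lastVisit, hset]

lemma frequently_lf_lastVisit (hne : ∃ s ∈ Icc 0 t, P (x s)) (htT : t ≤ T)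
    (hP : ¬ P (x (lastVisit P x t))) : ∃ᶠ w in lf T (lastVisit P x t), P (x w) := by
  obtain ⟨s, hs, hPs⟩ := hne
  refine (frequently_lf_of_isLUB (A := {u | u ∈ Icc 0 t ∧ P (x u)})
    (isLUB_csSup ⟨s, hs, hPs⟩ ⟨t, fun _ hu => hu.1.2⟩) ⟨s, hs, hPs⟩
    (fun u hu => ⟨hu.1.1, hu.1.2.trans htT⟩) fun h => hP h.2).mono fun _ hw => hw.2

lemma srec_eq_of_frequently {n : ℕ} (hne : ∃ s ∈ Icc 0 t, P (x s))
    (hP : ¬ P (x (lastVisit P x t))) (hsoft : softLeftLim T x (lastVisit P x t))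
    (hfreq : ∃ᶠ w in lf T (lastVisit P x t), x w = n) : srec T P x t = n := by
  have hn := mapClusterPt_natCast_iff.2 hfreq
  rw [srec, if_pos hne, if_neg hP]
  split_ifs with hL hpair
  · exact (eq_of_mapClusterPt_of_tendsto hn hL.choose_spec).symm
  · have hmem : (n : Sd) ∈ ({(hpair.choose : Sd), ⊤} : Set Sd) := hpair.choose_spec ▸ hn
    rcases hmem with h | h
    · exact h.symm
    · exact absurd h (ENat.natCast_ne_top n)
  · exact absurd hsoft (by simp only [softLeftLim, not_or]; exact ⟨hL, hpair⟩)

end Record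

/-- For a trajectory with a finite left limit at `t`, this says that the left limit differs
from `x t`. -/
def JumpsAt (T : ℝ) (x : ℝ → Sd) (t : ℝ) : Prop := ¬ ∀ᶠ w in lf T t, x w = x t

lemma eq_of_forall_not_jumpsAt {T a b : ℝ} {x : ℝ → Sd} (ha : 0 ≤ a) (hab : a ≤ b)
    (hbT : b ≤ T) (hright : ∀ s ∈ Ico a b, ∀ᶠ w in rf T s, x w = x s)
    (hjump : ∀ s ∈ Ioc a b, ¬ JumpsAt T x s) : x b = x a := by
  by_contra hb
  set S := {s | s ∈ Icc a b ∧ x s ≠ x a}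
  have hbS : b ∈ S := ⟨⟨hab, le_rfl⟩, hb⟩
  have hbdd : BddBelow S := ⟨a, fun _ hs => hs.1.1⟩
  set c := sInf S
  have hac : a ≤ c := le_csInf ⟨b, hbS⟩ fun _ hs => hs.1.1
  have hcb : c ≤ b := csInf_le hbdd hbS
  by_cases hc : x c = x a
  · -- right-continuity at `c = inf S` is violated by the points of `S` accumulating at `c`
    have hcS : c ∉ S := fun h => h.2 hc
    have hcb' : c < b := hcb.lt_of_ne fun h => hcS (h ▸ hbS)
    obtain ⟨w, hwS, hw⟩ := ((frequently_rf_of_isGLB (isGLB_csInf ⟨b, hbS⟩ hbdd) ⟨b, hbS⟩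
      (fun _ hs => ⟨ha.trans hs.1.1, hs.1.2.trans hbT⟩) hcS).and_eventually
      (hright c ⟨hac, hcb'⟩)).exists
    exact hwS.2 (hw.trans hc)
  · have hac' : a < c := hac.lt_of_ne fun h => hc (h ▸ rfl)
    have := lf_neBot (ha.trans_lt hac') (hcb.trans hbT)
    obtain ⟨w, hw, hwa, hwc⟩ := ((not_not.1 (hjump c ⟨hac', hcb⟩)).and
      ((eventually_gt_lf hac').and eventually_mem_lf)).exists
    refine hc (hw.symm.trans (by_contra fun h => ?_))
    exact (csInf_le hbdd ⟨⟨hwa.le, hwc.2.le.trans hcb⟩, h⟩).not_gt hwc.2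

structure ConsistentFamily (T : ℝ) (y : ℕ → ℝ → Sd) : Prop where
  mem : ∀ m, memD T m (y m)
  rec_succ : ∀ m, EqOn (Rm T m (y (m + 1))) (y m) (Icc 0 T)

def limTraj (y : ℕ → ℝ → Sd) (t : ℝ) : Sd := ⨆ m, y m t

lemma le_limTraj {y : ℕ → ℝ → Sd} {t : ℝ} (m : ℕ) : y m t ≤ limTraj y t :=
  le_iSup (fun m => y m t) m

lemma tendsto_limTraj_top {y : ℕ → ℝ → Sd} {l : Filter ℝ}
    (h : ∀ M : ℕ, ∃ k, ∀ᶠ w in l, (M : Sd) < y k w) : Tendsto (limTraj y) l (𝓝 ⊤) :=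
  ENat.tendsto_nhds_top_iff_natCast_lt.2 fun M =>
    let ⟨k, hk⟩ := h M
    hk.mono fun _ hw => hw.trans_le (le_limTraj k)

namespace ConsistentFamily

variable {T t : ℝ} {y : ℕ → ℝ → Sd} {k m : ℕ}

lemma le_natCast (hy : ConsistentFamily T y) (ht : t ∈ Icc 0 T) : y m t ≤ m :=
  (hy.mem m).1 t ht

lemma ne_top (hy : ConsistentFamily T y) (ht : t ∈ Icc 0 T) : y m t ≠ ⊤ :=
  ne_top_of_le_ne_top (ENat.natCast_ne_top m) (hy.le_natCast ht)

lemma eq_of_succ_le (hy : ConsistentFamily T y) (ht : t ∈ Icc 0 T) (h : y (m + 1) t ≤ m) :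
    y m t = y (m + 1) t := by
  rw [← hy.rec_succ m ht, Rm, srec_eq_self (P := fun k => k ≤ (m : Sd)) ht.1 h]

lemma monotone (hy : ConsistentFamily T y) (ht : t ∈ Icc 0 T) : Monotone fun m => y m t :=
  monotone_nat_of_le_succ fun m =>
    if h : y (m + 1) t ≤ m then (hy.eq_of_succ_le ht h).le
    else (hy.le_natCast ht).trans (not_le.1 h).le

lemma limTraj_eq_of_forall_succ_le (hy : ConsistentFamily T y) (ht : t ∈ Icc 0 T)
    (h : ∀ j ≥ k, y (j + 1) t ≤ j) : limTraj y t = y k t := by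
  have hconst : ∀ j ≥ k, y j t = y k t :=
    Nat.le_induction rfl fun j hj ih => (hy.eq_of_succ_le ht (h j hj)).symm.trans ih
  refine le_antisymm (iSup_le fun j => ?_) (le_limTraj k)
  rcases le_total j k with hj | hj
  exacts [hy.monotone ht hj, (hconst j hj).le]

lemma eq_limTraj_of_limTraj_le (hy : ConsistentFamily T y) (ht : t ∈ Icc 0 T)
    (h : limTraj y t ≤ k) : y k t = limTraj y t :=
  (hy.limTraj_eq_of_forall_succ_le ht fun j hj =>
    (le_limTraj (j + 1)).trans (h.trans (Nat.cast_le.2 hj))).symm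

lemma exists_lt_succ_of_limTraj_eq_top (hy : ConsistentFamily T y) (ht : t ∈ Icc 0 T)
    (h : limTraj y t = ⊤) (K : ℕ) : ∃ k ≥ K, (k : Sd) < y (k + 1) t := by
  by_contra hc
  push Not at hc
  exact hy.ne_top ht ((hy.limTraj_eq_of_forall_succ_le ht hc).symm.trans h)

lemma limTraj_eq_of_forall_imp (hy : ConsistentFamily T y) (ht : t ∈ Icc 0 T) {Q : ℕ → Prop}
    (hk : Q k) (hstep : ∀ j, Q j → y (j + 1) t ≤ j ∧ Q (j + 1)) : limTraj y t = y k t :=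
  hy.limTraj_eq_of_forall_succ_le ht fun j hj =>
    (hstep j (Nat.le_induction hk (fun j _ ih => (hstep j ih).2) j hj)).1

lemma eventually_rf_eq (hy : ConsistentFamily T y) (ht : t ∈ Ico 0 T) :
    ∀ᶠ w in rf T t, y k w = y k t := by
  have hR := (hy.mem k).2.1 t ht
  rwa [rightLim, ENat.nhds_eq_pure (hy.ne_top (Ico_subset_Icc_self ht)), tendsto_pure] at hR

lemma exists_eventually_lf_eq (hy : ConsistentFamily T y) (ht : t ∈ Ioc 0 T) :
    ∃ Λ : ℕ, ∀ᶠ w in lf T t, y k w = Λ := by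
  obtain ⟨L, hL⟩ := (hy.mem k).2.2 t ht
  have := lf_neBot ht.1 ht.2
  induction L using ENat.recTopCoe with
  | top =>
    obtain ⟨w, hw, hmem⟩ :=
      ((ENat.tendsto_nhds_top_iff_natCast_lt.1 hL k).and eventually_mem_lf).exists
    exact absurd (hy.le_natCast hmem.1) hw.not_ge
  | coe Λ => exact ⟨Λ, tendsto_natCast_iff.1 hL⟩

/-- `y m = R_m y (m + 1)` only records the past of `y (m + 1)` while it stays above `m`, so
`y m` can only jump at a visit of `y (m + 1)` to `S_m`. -/
lemma succ_le_of_jumpsAt (hy : ConsistentFamily T y) (ht : t ∈ Ioc 0 T)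
    (hj : JumpsAt T (y m) t) : y (m + 1) t ≤ m := by
  by_contra hgt
  have htI := Ioc_subset_Icc_self ht
  have hrec : ∀ w ∈ Icc 0 T, srec T (· ≤ (m : Sd)) (y (m + 1)) w = y m w :=
    fun w hw => hy.rec_succ m hw
  apply hj
  by_cases hvis : ∃ s ∈ Icc 0 t, y (m + 1) s ≤ m
  · rcases (lastVisit_mem_Icc (P := fun k => k ≤ (m : Sd)) hvis).2.lt_or_eq with hlt | heq
    · filter_upwards [eventually_gt_lf hlt, eventually_mem_lf] with w hw hmem
      rw [← hrec w hmem.1, ← hrec t htI]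
      exact srec_eq_of_lastVisit_le hvis hw.le hmem.2.le
    · have := lf_neBot ht.1 ht.2
      obtain ⟨Λ, hΛ⟩ := hy.exists_eventually_lf_eq (k := m + 1) ht
      have hfreq := frequently_lf_lastVisit (P := fun k => k ≤ (m : Sd)) hvis ht.2 (by rwa [heq])
      rw [heq] at hfreq
      obtain ⟨w, hwle, hw⟩ := (hfreq.and_eventually hΛ).exists
      have hΛm : (Λ : Sd) ≤ m := hw ▸ hwle
      have hyt : y m t = Λ := by
        rw [← hrec t htI]
        exact srec_eq_of_frequently hvis (by rwa [heq])
          (by rw [heq]; exact Or.inl ⟨Λ, tendsto_natCast_iff.2 hΛ⟩)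
          (by rw [heq]; exact hΛ.frequently)
      filter_upwards [hΛ, eventually_mem_lf] with w hw hmem
      rw [hyt, hy.eq_of_succ_le hmem.1 (hw ▸ hΛm), hw]
  · have h0 : ∀ w ∈ Icc 0 T, w ≤ t → y m w = 0 := fun w hw hwt => by
      rw [← hrec w hw]
      exact srec_of_not_exists fun ⟨s, hs, hP⟩ => hvis ⟨s, ⟨hs.1, hs.2.trans hwt⟩, hP⟩
    filter_upwards [eventually_mem_lf] with w hw
    rw [h0 w hw.1 hw.2.le, h0 t htI le_rfl]

lemma limTraj_eq_of_jumpsAt (hy : ConsistentFamily T y) (ht : t ∈ Ioc 0 T)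
    (hj : JumpsAt T (y k) t) : limTraj y t = y k t := by
  have htI := Ioc_subset_Icc_self ht
  refine hy.limTraj_eq_of_forall_imp htI (Q := fun j => JumpsAt T (y j) t) hj fun j hj => ?_
  have hle := hy.succ_le_of_jumpsAt ht hj
  refine ⟨hle, fun hev => hj ?_⟩
  filter_upwards [hev, eventually_mem_lf] with w hw hmem
  rw [hy.eq_of_succ_le hmem.1 (hw ▸ hle), hw, ← hy.eq_of_succ_le htI hle]

lemma limTraj_zero_eq (hy : ConsistentFamily T y) (hT : 0 ≤ T) (h : y k 0 ≠ 0) :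
    limTraj y 0 = y k 0 := by
  have h0 : (0 : ℝ) ∈ Icc 0 T := ⟨le_rfl, hT⟩
  refine hy.limTraj_eq_of_forall_imp h0 (Q := fun j => y j 0 ≠ 0) h fun j hj => ?_
  have hle : y (j + 1) 0 ≤ j := by
    by_contra hgt
    refine hj ((hy.rec_succ j h0).symm.trans (srec_of_not_exists ?_))
    rintro ⟨s, hs, hP⟩
    exact hgt (le_antisymm hs.2 hs.1 ▸ hP)
  exact ⟨hle, (hy.eq_of_succ_le h0 hle) ▸ hj⟩

lemma tendsto_limTraj_or_cluster_eq_pair (hy : ConsistentFamily T y) {l : Filter ℝ}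
    (hl : ∀ᶠ w in l, w ∈ Icc 0 T) {k₀ n : ℕ} (h : ∀ k ≥ k₀, ∀ᶠ w in l, y k w = n) :
    Tendsto (limTraj y) l (𝓝 n) ∨ Tendsto (limTraj y) l (𝓝 ⊤) ∨
      {L | MapClusterPt L l (limTraj y)} = {(n : Sd), ⊤} := by
  refine tendsto_or_cluster_eq_pair fun K => ?_
  filter_upwards [h (max K k₀) (le_max_right _ _), hl] with w hw hmem
  by_cases hY : limTraj y w ≤ (max K k₀ : ℕ)
  · exact Or.inl ((hy.eq_limTraj_of_limTraj_le hmem hY).symm.trans hw)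
  · exact Or.inr ((Nat.cast_le.2 (le_max_left K k₀)).trans_lt (not_le.1 hY))

lemma softRightCont_limTraj (hy : ConsistentFamily T y) (ht : t ∈ Icc 0 T) :
    softRightCont T (limTraj y) t := by
  rcases ht.2.lt_or_eq with hlt | rfl
  · have htIco : t ∈ Ico 0 T := ⟨ht.1, hlt⟩
    by_cases htop : limTraj y t = ⊤
    · refine Or.inl (tendsto_limTraj_top fun M => ?_)
      obtain ⟨k, hk⟩ := lt_iSup_iff.1 (htop ▸ ENat.natCast_lt_top M : (M : Sd) < limTraj y t)
      exact ⟨k, (hy.eventually_rf_eq htIco).mono fun w hw => hw ▸ hk⟩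
    obtain ⟨n, hn⟩ := ENat.ne_top_iff_exists.1 htop
    have hconst : ∀ k ≥ n, ∀ᶠ w in rf T t, y k w = n := fun k hk =>
      (hy.eventually_rf_eq htIco).mono fun w hw => hw.trans
        ((hy.eq_limTraj_of_limTraj_le ht (hn ▸ Nat.cast_le.2 hk)).trans hn.symm)
    rcases hy.tendsto_limTraj_or_cluster_eq_pair (eventually_mem_rf.mono fun _ h => h.1)
      hconst with h | h | h
    exacts [Or.inr (Or.inl ⟨n, h, hn.symm⟩), Or.inl h, Or.inr (Or.inr ⟨n, h, hn.symm⟩)]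
  · refine Or.inl ?_
    rw [rightLim, rf, eq_empty_of_forall_notMem fun w (hw : w ∈ Icc 0 t ∩ Ioi t) =>
      hw.1.2.not_gt hw.2, nhdsWithin_empty]
    exact tendsto_bot

lemma softLeftLim_limTraj (hy : ConsistentFamily T y) (ht : t ∈ Ioc 0 T) :
    softLeftLim T (limTraj y) t := by
  have := lf_neBot ht.1 ht.2
  choose Λ hΛ using fun k => hy.exists_eventually_lf_eq (k := k) ht
  have hmono : Monotone Λ := monotone_nat_of_le_succ fun k => by
    obtain ⟨w, h1, h2, hmem⟩ := ((hΛ k).and ((hΛ (k + 1)).and eventually_mem_lf)).exists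
    have hle : y k w ≤ y (k + 1) w := hy.monotone hmem.1 k.le_succ
    rw [h1, h2] at hle
    exact_mod_cast hle
  by_cases hbdd : BddAbove (range Λ)
  · obtain ⟨k₀, hk₀⟩ := Nat.sSup_mem (range_nonempty Λ) hbdd
    have hconst : ∀ k ≥ k₀, ∀ᶠ w in lf T t, y k w = sSup (range Λ) := fun k hk =>
      (hΛ k).mono fun w hw => hw.trans
        (congrArg _ (le_antisymm (le_csSup hbdd ⟨k, rfl⟩) (hk₀ ▸ hmono hk)))
    rcases hy.tendsto_limTraj_or_cluster_eq_pair (eventually_mem_lf.mono fun _ h => h.1)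
      hconst with h | h | h
    exacts [Or.inl ⟨_, h⟩, Or.inl ⟨_, h⟩, Or.inr ⟨_, h⟩]
  · refine Or.inl ⟨⊤, tendsto_limTraj_top fun M => ?_⟩
    obtain ⟨_, ⟨k, rfl⟩, hk⟩ := not_bddAbove_iff.1 hbdd M
    exact ⟨k, (hΛ k).mono fun w hw => hw ▸ Nat.cast_lt.2 hk⟩

lemma limTraj_zero_ne_top (hy : ConsistentFamily T y) (hT : 0 ≤ T) : limTraj y 0 ≠ ⊤ := by
  intro h
  have h0 : (0 : ℝ) ∈ Icc 0 T := ⟨le_rfl, hT⟩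
  obtain ⟨k, -, hk⟩ := hy.exists_lt_succ_of_limTraj_eq_top h0 h 0
  exact hy.ne_top h0 ((hy.limTraj_zero_eq hT (pos_of_gt hk).ne').symm.trans h)

lemma leftLim_limTraj_of_eq_top (hy : ConsistentFamily T y) (ht : t ∈ Ioc 0 T)
    (htop : limTraj y t = ⊤) : leftLim T (limTraj y) t ⊤ := by
  have htI := Ioc_subset_Icc_self ht
  refine ENat.tendsto_nhds_top_iff_natCast_lt.2 fun M => by_contra fun hev => ?_
  rw [not_eventually] at hev
  obtain ⟨k, hk, hlt⟩ := hy.exists_lt_succ_of_limTraj_eq_top htI htop M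
  have hj : JumpsAt T (y (k + 1)) t := fun hev' => by
    obtain ⟨w, hw, hw'⟩ := (hev.and_eventually hev').exists
    exact hw (((Nat.cast_le.2 hk).trans_lt hlt).trans_le (hw' ▸ le_limTraj (k + 1)))
  exact hy.ne_top htI ((hy.limTraj_eq_of_jumpsAt ht hj).symm.trans htop)

/-- Between `σ_∞(t)` and `t` the limit stays at `⊤`, so no `y k` may jump there; a finite value
at `σ_∞(t)` would then be kept by the `y k` that reach `k + 1` at `t`. -/
lemma limTraj_sigmaInf_eq_top (hy : ConsistentFamily T y) (ht : t ∈ Ioc 0 T)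
    (htop : limTraj y t = ⊤) : limTraj y (sigmaInf (limTraj y) t) = ⊤ := by
  have htI := Ioc_subset_Icc_self ht
  have hσI := lastVisit_mem_Icc (P := fun k => k ≠ ⊤) (x := limTraj y)
    ⟨0, ⟨le_rfl, ht.1.le⟩, hy.limTraj_zero_ne_top (ht.1.le.trans ht.2)⟩
  have hσT : sigmaInf (limTraj y) t ∈ Icc 0 T := ⟨hσI.1, hσI.2.trans ht.2⟩
  by_contra hσ
  obtain ⟨n, hn⟩ := ENat.ne_top_iff_exists.1 hσ
  obtain ⟨k, hk, hlt⟩ := hy.exists_lt_succ_of_limTraj_eq_top htI htop n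
  have hyσ : y (k + 1) (sigmaInf (limTraj y) t) = n :=
    (hy.eq_limTraj_of_limTraj_le hσT (hn ▸ Nat.cast_le.2 (hk.trans k.le_succ))).trans hn.symm
  have heq : y (k + 1) t = y (k + 1) (sigmaInf (limTraj y) t) :=
    eq_of_forall_not_jumpsAt hσI.1 hσI.2 ht.2
      (fun s hs => hy.eventually_rf_eq ⟨hσI.1.trans hs.1, hs.2.trans_le ht.2⟩) fun s hs hj =>
      not_of_lastVisit_lt ⟨hσI.1.trans hs.1.le, hs.2⟩ hs.1
        ((hy.limTraj_eq_of_jumpsAt ⟨hσI.1.trans_lt hs.1, hs.2.trans ht.2⟩ hj) ▸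
          hy.ne_top ⟨hσI.1.trans hs.1.le, hs.2.trans ht.2⟩)
  rw [heq, hyσ, Nat.cast_lt] at hlt
  omega

lemma memE_limTraj (hy : ConsistentFamily T y) (hT : 0 ≤ T) : memE T (limTraj y) := by
  refine ⟨⟨fun t ht => hy.softRightCont_limTraj ht, fun t ht => hy.softLeftLim_limTraj ht⟩,
    hy.limTraj_zero_ne_top hT, fun t ht htop => ?_⟩
  have hσ := hy.limTraj_sigmaInf_eq_top ht htop
  have hσI := lastVisit_mem_Icc (P := fun k => k ≠ ⊤) (x := limTraj y)
    ⟨0, ⟨le_rfl, ht.1.le⟩, hy.limTraj_zero_ne_top hT⟩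
  have hσpos : 0 < sigmaInf (limTraj y) t :=
    hσI.1.lt_of_ne fun h => hy.limTraj_zero_ne_top hT (h ▸ hσ)
  exact ⟨hσpos, hσ, hy.leftLim_limTraj_of_eq_top ⟨hσpos, hσI.2.trans ht.2⟩ hσ⟩

/-- `y m` agrees with the limit wherever the limit is in `S_m`, and can only jump at such times;
so after the last visit of the limit to `S_m` it keeps the recorded value. -/
lemma Rm_limTraj (hy : ConsistentFamily T y) (m : ℕ) (ht : t ∈ Icc 0 T) :
    Rm T m (limTraj y) t = y m t := by
  have hvisit : ∀ s ∈ Icc 0 T, limTraj y s ≤ m → y m s = limTraj y s :=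
    fun s hs => hy.eq_limTraj_of_limTraj_le hs
  have hconst : ∀ a ∈ Icc 0 t, (∀ s ∈ Ioc a t, ¬ limTraj y s ≤ m) → y m t = y m a :=
    fun a ha h => eq_of_forall_not_jumpsAt ha.1 ha.2 ht.2
      (fun s hs => hy.eventually_rf_eq ⟨ha.1.trans hs.1, hs.2.trans_le ht.2⟩) fun s hs hj =>
      h s hs ((hy.limTraj_eq_of_jumpsAt ⟨ha.1.trans_lt hs.1, hs.2.trans ht.2⟩ hj) ▸
        hy.le_natCast ⟨ha.1.trans hs.1.le, hs.2.trans ht.2⟩)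
  rw [Rm]
  set P : Sd → Prop := fun k => k ≤ (m : Sd)
  by_cases hW : ∃ s ∈ Icc 0 t, P (limTraj y s)
  · set σ := lastVisit P (limTraj y) t
    have hσI : σ ∈ Icc 0 t := lastVisit_mem_Icc hW
    have hσT : σ ∈ Icc 0 T := ⟨hσI.1, hσI.2.trans ht.2⟩
    rw [hconst σ hσI fun s hs => not_of_lastVisit_lt ⟨hσI.1.trans hs.1.le, hs.2⟩ hs.1]
    by_cases hYσ : limTraj y σ ≤ m
    · rw [srec_of_lastVisit hW hYσ, hvisit σ hσT hYσ]
    have hσpos : 0 < σ := hσI.1.lt_of_ne fun h => by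
      obtain ⟨s, hs, hPs⟩ := hW
      have hsσ : s = σ := le_antisymm (le_lastVisit hs hPs) (h.symm.le.trans hs.1)
      exact hYσ (hsσ ▸ hPs)
    have hσIoc : σ ∈ Ioc 0 T := ⟨hσpos, hσT.2⟩
    have hnj : ¬ JumpsAt T (y m) σ := fun hj =>
      hYσ ((hy.limTraj_eq_of_jumpsAt hσIoc hj) ▸ hy.le_natCast hσT)
    obtain ⟨n, hn⟩ := ENat.ne_top_iff_exists.1 (hy.ne_top (m := m) hσT)
    rw [← hn]
    refine srec_eq_of_frequently hW hYσ (hy.softLeftLim_limTraj hσIoc) ?_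
    refine ((frequently_lf_lastVisit hW ht.2 hYσ).and_eventually
      ((not_not.1 hnj).and eventually_mem_lf)).mono fun w ⟨hwm, hw, hmem⟩ => ?_
    exact (hvisit w hmem.1 hwm).symm.trans (hw.trans hn.symm)
  · rw [srec_of_not_exists hW, hconst 0 ⟨le_rfl, ht.1⟩ fun s hs h => hW ⟨s, ⟨hs.1.le, hs.2⟩, h⟩]
    by_contra h0
    exact hW ⟨0, ⟨le_rfl, ht.1⟩, hy.limTraj_zero_eq (ht.1.trans ht.2) (Ne.symm h0) ▸
      hy.le_natCast ⟨le_rfl, ht.1.trans ht.2⟩⟩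

end ConsistentFamily

end Soft

open Soft Filter Topology in
/-- If `y_m ∈ D([0,T], S_m)` satisfy `R_m y_{m+1} = y_m` for all `m`, then there exists
`y ∈ E([0,T], S_d)` with `R_m y = y_m` for all `m`; moreover `y` is the pointwise limit
of the nondecreasing sequence `y_m`. -/
theorem stmt13 (T : ℝ) (hT : 0 < T) (y : ℕ → ℝ → Soft.Sd)
    (hmem : ∀ m, Soft.memD T m (y m))
    (hcomp : ∀ m, Set.EqOn (Soft.Rm T m (y (m + 1))) (y m) (Set.Icc 0 T)) :
    ∃ Y : ℝ → Soft.Sd, Soft.memE T Y ∧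
      (∀ m, Set.EqOn (Soft.Rm T m Y) (y m) (Set.Icc 0 T)) ∧
      ∀ t ∈ Set.Icc 0 T, (Monotone fun m => y m t) ∧
        Filter.Tendsto (fun m => y m t) Filter.atTop (𝓝 (Y t)) := by
  have hy : ConsistentFamily T y := ⟨hmem, hcomp⟩
  exact ⟨limTraj y, hy.memE_limTraj hT.le, fun m _ ht => hy.Rm_limTraj m ht,
    fun _ ht => ⟨hy.monotone ht, tendsto_atTop_iSup (hy.monotone ht)⟩⟩
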